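/- arXiv:2208.03622 — 4 statements merged into one kernel-verified Lean document; each statement's English description precedes it below -/
import Mathlib

section
/- Let {w₁,…,wₙ} be a basis of ℝⁿ, x ∈ ℝⁿ, and X an n×n real symmetric matrix. Then X = xxᵀ if and only if for all i, j ∈ {1,…,n}: (wᵢ+wⱼ)ᵀ X (wᵢ+wⱼ) = ((wᵢ+wⱼ)ᵀx)² and (wᵢ−wⱼ)ᵀ X (wᵢ−wⱼ) = ((wᵢ−wⱼ)ᵀx)². -/
/-!
For a symmetric matrix `A`, polarization gives
`(u + v)ᵀ A (u + v) - (u - v)ᵀ A (u - v) = 4 uᵀ A v`, so the quadratic form of `A` on all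
`wᵢ ± wⱼ` determines the bilinear form `(u, v) ↦ uᵀ A v` on pairs of basis vectors, hence
everywhere, hence `A`. Apply this to `X` and to the symmetric matrix `x xᵀ`, whose quadratic form
is `u ↦ (uᵀ x)²`.
-/

open Matrix

namespace Matrix

variable {ι κ R : Type*} [CommRing R]

theorem isSymm_vecMulVec_self (x : ι → R) : (vecMulVec x x).IsSymm :=
  transpose_vecMulVec x x

variable [Fintype ι]

theorem dotProduct_vecMulVec_mulVec (u x y v : ι → R) :
    u ⬝ᵥ vecMulVec x y *ᵥ v = (u ⬝ᵥ x) * (y ⬝ᵥ v) := by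
  rw [vecMulVec_mulVec, op_smul_eq_smul, dotProduct_smul, smul_eq_mul, mul_comm]

theorem dotProduct_vecMulVec_self_mulVec (u x : ι → R) :
    u ⬝ᵥ vecMulVec x x *ᵥ u = (u ⬝ᵥ x) ^ 2 := by
  rw [dotProduct_vecMulVec_mulVec, dotProduct_comm x, sq]

theorem IsSymm.dotProduct_mulVec_add_sub {A : Matrix ι ι R} (hA : A.IsSymm) (u v : ι → R) :
    (u + v) ⬝ᵥ A *ᵥ (u + v) - (u - v) ⬝ᵥ A *ᵥ (u - v) = 4 * (u ⬝ᵥ A *ᵥ v) := by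
  have hvu : v ⬝ᵥ A *ᵥ u = u ⬝ᵥ A *ᵥ v := by
    rw [dotProduct_mulVec, ← mulVec_transpose, hA.eq, dotProduct_comm]
  simp only [mulVec_add, mulVec_sub, dotProduct_add, dotProduct_sub, add_dotProduct,
    sub_dotProduct, hvu]
  ring

theorem ext_basis_dotProduct_mulVec [DecidableEq ι] (w : Module.Basis κ R (ι → R))
    {A B : Matrix ι ι R} (h : ∀ i j, w i ⬝ᵥ A *ᵥ w j = w i ⬝ᵥ B *ᵥ w j) : A = B :=
  toBilin'.injective <| LinearMap.BilinForm.ext_basis w fun i j => by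
    simpa only [toBilin'_apply'] using h i j

theorem IsSymm.ext_basis_add_sub [DecidableEq ι] [IsDomain R] [NeZero (2 : R)]
    {A B : Matrix ι ι R} (hA : A.IsSymm) (hB : B.IsSymm) (w : Module.Basis κ R (ι → R))
    (h : ∀ i j, (w i + w j) ⬝ᵥ A *ᵥ (w i + w j) = (w i + w j) ⬝ᵥ B *ᵥ (w i + w j) ∧
      (w i - w j) ⬝ᵥ A *ᵥ (w i - w j) = (w i - w j) ⬝ᵥ B *ᵥ (w i - w j)) :
    A = B := by
  refine ext_basis_dotProduct_mulVec w fun i j => ?_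
  have h4 : (4 : R) ≠ 0 := by
    simpa [show (4 : R) = 2 * 2 by norm_num] using (NeZero.ne (2 : R))
  refine mul_left_cancel₀ h4 ?_
  rw [← hA.dotProduct_mulVec_add_sub, ← hB.dotProduct_mulVec_add_sub, (h i j).1, (h i j).2]

end Matrix

/-- For a basis `{w₁,…,wₙ}` of `ℝⁿ`, `x ∈ ℝⁿ` and a symmetric matrix `X`,
`X = x xᵀ` iff `(wᵢ±wⱼ)ᵀ X (wᵢ±wⱼ) = ((wᵢ±wⱼ)ᵀ x)²` for all `i, j`. -/
theorem stmt1 (n : ℕ) (w : Module.Basis (Fin n) ℝ (Fin n → ℝ)) (x : Fin n → ℝ)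
    (X : Matrix (Fin n) (Fin n) ℝ) (hX : X.IsSymm) :
    X = Matrix.vecMulVec x x ↔
      ∀ i j : Fin n,
        dotProduct (w i + w j) (X.mulVec (w i + w j))
          = (dotProduct (w i + w j) x) ^ 2 ∧
        dotProduct (w i - w j) (X.mulVec (w i - w j))
          = (dotProduct (w i - w j) x) ^ 2 := by
  simp_rw [← dotProduct_vecMulVec_self_mulVec _ x]
  constructor
  · rintro rfl i j
    exact ⟨rfl, rfl⟩
  · exact hX.ext_basis_add_sub (isSymm_vecMulVec_self x) w
end

section
/- Consider F = {(x₁,x₂) ∈ ℝ² : x₂ + (x₁ − x₂)² = 0}. The projection onto ℝ² of its parabolic relaxation with the standard basis, namely the set of (x₁,x₂) for which there exist X₁₁, X₂₂, X₁₂ with x₂ + X₁₁ + X₂₂ − 2X₁₂ = 0, X₁₁ + X₂₂ + 2X₁₂ ≥ (x₁+x₂)², X₁₁ + X₂₂ − 2X₁₂ ≥ (x₁−x₂)², X₁₁ ≥ x₁², X₂₂ ≥ x₂², equals {(x₁,x₂) : x₂ + (x₁ − x₂)² ≤ 0}. -/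
/-!
Only the equality constraint and the cut along `x₁ − x₂` matter for the inclusion `⊆`: together
they give `x₂ + (x₁ − x₂)² ≤ x₂ + (X₁₁ + X₂₂ − 2X₁₂) = 0`. Conversely, a point with
`x₂ + (x₁ − x₂)² ≤ 0` lifts to `X = x xᵀ + t I`, where `2t = −x₂ − (x₁ − x₂)² ≥ 0` is the slack;
every parabolic cut then holds with room `0` or `2t`.
-/

section ParabolicRelaxation

variable {x y c X11 X22 X12 : ℝ}

theorem add_sq_sub_nonpos_of_parabolic_cut (hEq : c + X11 + X22 - 2 * X12 = 0)
    (hCut : X11 + X22 - 2 * X12 ≥ (x - y) ^ 2) : c + (x - y) ^ 2 ≤ 0 := by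
  linarith

theorem exists_parabolic_lift_of_add_sq_sub_nonpos (h : c + (x - y) ^ 2 ≤ 0) :
    ∃ X11 X22 X12 : ℝ,
      c + X11 + X22 - 2 * X12 = 0 ∧
      X11 + X22 + 2 * X12 ≥ (x + y) ^ 2 ∧
      X11 + X22 - 2 * X12 ≥ (x - y) ^ 2 ∧
      X11 ≥ x ^ 2 ∧ X22 ≥ y ^ 2 := by
  set t := -(c + (x - y) ^ 2) / 2 with ht_def
  have ht : 0 ≤ t := by linarith
  have hSub : (x - y) ^ 2 = x ^ 2 + y ^ 2 - 2 * (x * y) := by ring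
  have hAdd : (x + y) ^ 2 = x ^ 2 + y ^ 2 + 2 * (x * y) := by ring
  refine ⟨x ^ 2 + t, y ^ 2 + t, x * y, ?_, ?_, ?_, ?_, ?_⟩ <;> linarith

end ParabolicRelaxation

/-- The projection onto `ℝ²` of the parabolic relaxation (standard basis)
of `F = {(x₁,x₂) : x₂ + (x₁ − x₂)² = 0}` equals `{(x₁,x₂) : x₂ + (x₁ − x₂)² ≤ 0}`. -/
theorem stmt8 :
    {p : ℝ × ℝ | ∃ X11 X22 X12 : ℝ,
        p.2 + X11 + X22 - 2 * X12 = 0 ∧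
        X11 + X22 + 2 * X12 ≥ (p.1 + p.2) ^ 2 ∧
        X11 + X22 - 2 * X12 ≥ (p.1 - p.2) ^ 2 ∧
        X11 ≥ p.1 ^ 2 ∧ X22 ≥ p.2 ^ 2}
      = {p : ℝ × ℝ | p.2 + (p.1 - p.2) ^ 2 ≤ 0} := by
  ext ⟨x, y⟩
  constructor
  · rintro ⟨X11, X22, X12, hEq, -, hCut, -, -⟩
    exact add_sq_sub_nonpos_of_parabolic_cut hEq hCut
  · exact exists_parabolic_lift_of_add_sq_sub_nonpos
end

section
/- Consider F = {(x₁,x₂) ∈ ℝ² : x₂ + (x₁ − x₂)² = 0}. The projection onto ℝ² of its SOCP relaxation, namely the set of (x₁,x₂) for which there exist X₁₁, X₂₂, X₁₂ with x₂ + X₁₁ + X₂₂ − 2X₁₂ = 0, X₁₁X₂₂ ≥ X₁₂², X₁₁ ≥ x₁², X₂₂ ≥ x₂², equals the half-plane {(x₁,x₂) : x₂ ≤ 0}. -/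
/-!
Since `X₁₁, X₂₂ ≥ 0` and `X₁₂² ≤ X₁₁ X₂₂`, AM–GM gives `2 X₁₂ ≤ X₁₁ + X₂₂`, so the linear
constraint forces `x₂ = 2 X₁₂ - X₁₁ - X₂₂ ≤ 0`. Conversely, for `x₂ ≤ 0` the choice
`X₁₁ = X₂₂ = s`, `X₁₂ = s + x₂ / 2` with `s = x₁² + x₂² - x₂` satisfies every constraint:
the determinant condition `s² ≥ (s + x₂/2)²` reads `x₂ (s + x₂/4) ≤ 0`.
-/

lemma exists_socp_lift_of_snd_nonpos {x₁ x₂ : ℝ} (h : x₂ ≤ 0) :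
    ∃ X11 X22 X12 : ℝ, x₂ + X11 + X22 - 2 * X12 = 0 ∧ X11 * X22 ≥ X12 ^ 2 ∧
      X11 ≥ x₁ ^ 2 ∧ X22 ≥ x₂ ^ 2 := by
  set s := x₁ ^ 2 + x₂ ^ 2 - x₂
  have hs : x₁ ^ 2 ≤ s ∧ x₂ ^ 2 ≤ s := ⟨by nlinarith [sq_nonneg x₂], by nlinarith [sq_nonneg x₁]⟩
  have hdet : (s + x₂ / 2) ^ 2 ≤ s * s := by
    have : 0 ≤ s + x₂ / 4 := by nlinarith [sq_nonneg x₁, sq_nonneg x₂]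
    nlinarith
  exact ⟨s, s, s + x₂ / 2, by ring, hdet, hs.1, hs.2⟩

/-- The projection onto `ℝ²` of the SOCP relaxation of
`F = {(x₁,x₂) : x₂ + (x₁ − x₂)² = 0}` equals the half-plane `{(x₁,x₂) : x₂ ≤ 0}`. -/
theorem stmt9 :
    {p : ℝ × ℝ | ∃ X11 X22 X12 : ℝ,
        p.2 + X11 + X22 - 2 * X12 = 0 ∧
        X11 * X22 ≥ X12 ^ 2 ∧
        X11 ≥ p.1 ^ 2 ∧ X22 ≥ p.2 ^ 2}
      = {p : ℝ × ℝ | p.2 ≤ 0} := by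
  ext ⟨x₁, x₂⟩
  constructor
  · rintro ⟨X11, X22, X12, hlin, hdet, h11, h22⟩
    have := two_mul_le_add_of_sq_le_mul ((sq_nonneg x₁).trans h11) ((sq_nonneg x₂).trans h22) hdet
    change x₂ ≤ 0
    linarith
  · exact exists_socp_lift_of_snd_nonpos
end

section
/- For a symmetric n×n matrix M, if M is diagonally dominant with nonnegative diagonal entries (Mᵢᵢ ≥ Σ_{j≠i}|Mᵢⱼ| for all i), then for all X ∈ Sₙ and Y ∈ ℝ^{n×m} satisfying the standard-basis parabolic inequalities Xᵢᵢ + Xⱼⱼ ± 2Xᵢⱼ ≥ ‖(eᵢ±eⱼ)ᵀY‖₂², one has tr{M X} ≥ tr{Yᵀ M Y}. -/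
/-!
With `C = X - Y Yᵀ` the claim is `0 ≤ tr (M C)`, and the parabolic inequalities say
`Cᵢᵢ + Cⱼⱼ ± 2 Cᵢⱼ ≥ 0`. Diagonal dominance writes `M` as
`∑ᵢ (Mᵢᵢ - ∑_{j ≠ i} |Mᵢⱼ|) eᵢeᵢᵀ + ½ ∑_{i ≠ j} |Mᵢⱼ| (eᵢ + sᵢⱼ eⱼ)(eᵢ + sᵢⱼ eⱼ)ᵀ` with
`sᵢⱼ` the sign of `Mᵢⱼ`, so `tr (M C)` is a nonnegative combination of the `Cᵢᵢ` and of the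
`Cᵢᵢ + Cⱼⱼ ± 2 Cᵢⱼ`.
-/

open Matrix Finset

section

variable {R : Type*} [CommRing R] [LinearOrder R] [IsStrictOrderedRing R]

theorem neg_abs_mul_le_two_mul_mul {a p r : R} (hplus : 0 ≤ p + 2 * r)
    (hminus : 0 ≤ p - 2 * r) : -(|a| * p) ≤ 2 * (a * r) := by
  rcases abs_cases a with ⟨ha, ha_nonneg⟩ | ⟨ha, ha_neg⟩ <;> rw [ha]
  · nlinarith [mul_nonneg ha_nonneg hplus]
  · nlinarith [mul_nonneg (neg_nonneg.mpr ha_neg.le) hminus]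

variable {ι : Type*} [Fintype ι] [DecidableEq ι]

theorem sum_sum_sdiff_singleton_comm {β : Type*} [AddCommMonoid β] (f : ι → ι → β) :
    ∑ i, ∑ j ∈ univ \ {i}, f i j = ∑ j, ∑ i ∈ univ \ {j}, f i j :=
  sum_comm' fun _ _ => by simp [ne_comm]

theorem trace_mul_nonneg_of_diagDominant {M C : Matrix ι ι R} (hM : M.IsSymm)
    (hDD : ∀ i, ∑ j ∈ univ \ {i}, |M i j| ≤ M i i)
    (hC : ∀ i j, 0 ≤ C i i + C j j + 2 * C i j ∧ 0 ≤ C i i + C j j - 2 * C i j) :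
    0 ≤ trace (M * C) := by
  have hCdiag : ∀ i, 0 ≤ C i i := fun i => by linarith [(hC i i).1]
  have hswap : ∑ i, ∑ j ∈ univ \ {i}, |M i j| * C j j
      = ∑ i, ∑ j ∈ univ \ {i}, |M i j| * C i i := by
    rw [sum_sum_sdiff_singleton_comm]
    simp only [hM.apply]
  have htrace : trace (M * C) = ∑ i, ∑ j, M i j * C i j := by
    rw [trace_mul_comm]
    exact sum_congr rfl fun i _ => sum_congr rfl fun j _ => by
      show C i j * M j i = _
      rw [hM.apply i j, mul_comm]
  have hsplit : trace (M * C)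
      = ∑ i, M i i * C i i + ∑ i, ∑ j ∈ univ \ {i}, M i j * C i j := by
    rw [htrace, ← sum_add_distrib]
    exact sum_congr rfl fun i _ => sum_eq_add_sum_sdiff_singleton_of_mem (mem_univ i) _
  have hdiagonal : 0 ≤ ∑ i, M i i * C i i - ∑ i, ∑ j ∈ univ \ {i}, |M i j| * C i i := by
    rw [← sum_sub_distrib]
    refine sum_nonneg fun i _ => ?_
    rw [← sum_mul, ← sub_mul]
    exact mul_nonneg (sub_nonneg.mpr (hDD i)) (hCdiag i)
  have hoffdiagonal : -(2 * ∑ i, ∑ j ∈ univ \ {i}, |M i j| * C i i)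
      ≤ 2 * ∑ i, ∑ j ∈ univ \ {i}, M i j * C i j := calc
    _ = ∑ i, ∑ j ∈ univ \ {i}, -(|M i j| * (C i i + C j j)) := by
      simp only [mul_add, sum_add_distrib, sum_neg_distrib, hswap]
      ring
    _ ≤ _ := by
      rw [mul_sum]
      exact sum_le_sum fun i _ => by
        rw [mul_sum]
        exact sum_le_sum fun j _ => neg_abs_mul_le_two_mul_mul (hC i j).1 (hC i j).2
  linarith

end

section

variable {ι κ R : Type*} [Fintype κ] [CommRing R]

theorem sum_add_sq_eq_mul_transpose (Y : Matrix ι κ R) (i j : ι) :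
    ∑ k, (Y i k + Y j k) ^ 2 = (Y * Yᵀ) i i + (Y * Yᵀ) j j + 2 * (Y * Yᵀ) i j := by
  simp only [mul_apply, transpose_apply, mul_sum, ← sum_add_distrib]
  exact sum_congr rfl fun _ _ => by ring

theorem sum_sub_sq_eq_mul_transpose (Y : Matrix ι κ R) (i j : ι) :
    ∑ k, (Y i k - Y j k) ^ 2 = (Y * Yᵀ) i i + (Y * Yᵀ) j j - 2 * (Y * Yᵀ) i j := by
  simp only [mul_apply, transpose_apply, mul_sum, ← sum_add_distrib, ← sum_sub_distrib]
  exact sum_congr rfl fun _ _ => by ring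

end

theorem stmt11_general (n m : ℕ) (M : Matrix (Fin n) (Fin n) ℝ) (hMsymm : M.IsSymm)
    (hDD : ∀ i, ∑ j ∈ Finset.univ \ {i}, |M i j| ≤ M i i) :
    ∀ (X : Matrix (Fin n) (Fin n) ℝ) (Y : Matrix (Fin n) (Fin m) ℝ), X.IsSymm →
      (∀ i j : Fin n,
        (∑ k : Fin m, (Y i k + Y j k) ^ 2 ≤ X i i + X j j + 2 * X i j) ∧
        (∑ k : Fin m, (Y i k - Y j k) ^ 2 ≤ X i i + X j j - 2 * X i j)) →
      Matrix.trace (Yᵀ * M * Y) ≤ Matrix.trace (M * X) := by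
  intro X Y _ hpar
  have hresidual : 0 ≤ trace (M * (X - Y * Yᵀ)) := by
    refine trace_mul_nonneg_of_diagDominant hMsymm hDD fun i j => ?_
    have := hpar i j
    simp only [Matrix.sub_apply]
    constructor <;> linarith [sum_add_sq_eq_mul_transpose Y i j, sum_sub_sq_eq_mul_transpose Y i j]
  rw [trace_mul_cycle, trace_mul_comm]
  rwa [Matrix.mul_sub, trace_sub, sub_nonneg] at hresidual

/-- If `M` is symmetric and diagonally dominant with nonnegative diagonal,
then for all `(Y, X)` satisfying the standard-basis parabolic inequalities,
`tr{M X} ≥ tr{Yᵀ M Y}`. -/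
theorem stmt11 (n m : ℕ) (M : Matrix (Fin n) (Fin n) ℝ) (hMsymm : M.IsSymm)
    (hdiag : ∀ i, 0 ≤ M i i)
    (hDD : ∀ i, ∑ j ∈ Finset.univ \ {i}, |M i j| ≤ M i i) :
    ∀ (X : Matrix (Fin n) (Fin n) ℝ) (Y : Matrix (Fin n) (Fin m) ℝ), X.IsSymm →
      (∀ i j : Fin n,
        (∑ k : Fin m, (Y i k + Y j k) ^ 2 ≤ X i i + X j j + 2 * X i j) ∧
        (∑ k : Fin m, (Y i k - Y j k) ^ 2 ≤ X i i + X j j - 2 * X i j)) →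
      Matrix.trace (Yᵀ * M * Y) ≤ Matrix.trace (M * X) :=
  stmt11_general n m M hMsymm hDD
end
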